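/- Let m ≥ 1 be an integer and x ∈ O, and set M = (ϖ, ϖ^{1−2m}·x; 0, ϖ^{−1}) in SL₂(F). If x ∈ 𝔪^{2m−2} then M ∈ K₀·α₀^{−1}·I(1); if x ∉ 𝔪^{2m−2} then there exists an integer l ≤ −2 such that M ∈ K₀·α₀^{l}·I(1), where α₀^l = diag(ϖ^{−l}, ϖ^{l}). -/

import Mathlib

/-!
Write `π` for the image of `ϖ` in `F`. If `x = ϖ^{2m-2} b`, then `M = (1 b; 0 1) · α₀^{-1}`
with `(1 b; 0 1) ∈ K₀`. Otherwise `x = u ϖ^n` with `u` a unit and `n < 2m - 2`; putting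
`k = 2m - 2 - n ≥ 1`, `M = (0 u; -u⁻¹ π^k) · α₀^{-(k+1)} · (1 0; π^{k+2} u⁻¹ 1)`, where the first
factor lies in `K₀` and the last in `I(1)`.
-/

open Matrix Pointwise IsLocalRing

section

variable {O : Type*} [CommRing O] [IsDomain O] [IsDiscreteValuationRing O] {ϖ : O}

theorem Irreducible.mem_maximalIdeal_pow_iff_dvd (hϖ : Irreducible ϖ) {x : O} (j : ℕ) :
    x ∈ maximalIdeal O ^ j ↔ ϖ ^ j ∣ x := by
  rw [hϖ.maximalIdeal_eq, Ideal.span_singleton_pow, Ideal.mem_span_singleton]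

theorem Irreducible.exists_eq_unit_mul_pow_of_notMem_maximalIdeal_pow (hϖ : Irreducible ϖ)
    {x : O} {j : ℕ} (hx : x ∉ maximalIdeal O ^ j) : ∃ n < j, ∃ u : Oˣ, x = u * ϖ ^ n := by
  have hx0 : x ≠ 0 := by rintro rfl; exact hx (zero_mem _)
  obtain ⟨n, u, rfl⟩ := IsDiscreteValuationRing.eq_unit_mul_pow_irreducible hx0 hϖ
  refine ⟨n, lt_of_not_ge fun h => hx ?_, u, rfl⟩
  exact (hϖ.mem_maximalIdeal_pow_iff_dvd j).mpr (dvd_mul_of_dvd_right (pow_dvd_pow ϖ h) _)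

end

section

variable (O : Type*) [CommRing O] (F : Type*) [Field F] [Algebra O F]

def integralSL2 : Set (Matrix (Fin 2) (Fin 2) F) :=
  {M | M.det = 1 ∧ ∀ i j, ∃ a : O, M i j = algebraMap O F a}

def proIwahori [IsLocalRing O] : Set (Matrix (Fin 2) (Fin 2) F) :=
  {M | ∃ a b c d : O,
    M = !![algebraMap O F a, algebraMap O F b; algebraMap O F c, algebraMap O F d] ∧
    a * d - b * c = 1 ∧ a - 1 ∈ maximalIdeal O ∧ d - 1 ∈ maximalIdeal O ∧ c ∈ maximalIdeal O}

variable {O F}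

def diagZpow (π : F) (l : ℤ) : Matrix (Fin 2) (Fin 2) F :=
  !![π ^ (-l), 0; 0, π ^ l]

theorem mem_integralSL2_of_det_eq_one {a b c d : O} (h : a * d - b * c = 1) :
    !![algebraMap O F a, algebraMap O F b; algebraMap O F c, algebraMap O F d] ∈
      integralSL2 O F := by
  refine ⟨?_, fun i j => ?_⟩
  · rw [det_fin_two_of, ← map_mul, ← map_mul, ← map_sub, h, map_one]
  fin_cases i <;> fin_cases j <;> exact ⟨_, rfl⟩

theorem lowerUnipotent_mem_proIwahori [IsLocalRing O] {c : O} (hc : c ∈ maximalIdeal O) :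
    !![1, 0; algebraMap O F c, 1] ∈ proIwahori O F :=
  ⟨1, 0, c, 1, by simp, by ring, by simp, by simp, hc⟩

theorem one_mem_proIwahori [IsLocalRing O] :
    (1 : Matrix (Fin 2) (Fin 2) F) ∈ proIwahori O F := by
  simpa [one_fin_two] using lowerUnipotent_mem_proIwahori (F := F) (zero_mem (maximalIdeal O))

theorem upperTriangular_eq_unipotent_mul_diagZpow (π b : F) :
    !![π, π ^ (-1 : ℤ) * b; 0, π⁻¹] = !![1, b; 0, 1] * diagZpow π (-1) := by
  simp [diagZpow, mul_comm]

theorem upperTriangular_eq_weyl_mul_diagZpow_mul_lowerUnipotent {π : F} (hπ : π ≠ 0)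
    {u v : F} (huv : u * v = 1) (k : ℕ) :
    !![π, π ^ (-(k + 1 : ℤ)) * u; 0, π⁻¹] =
      !![0, u; -v, π ^ k] * diagZpow π (-(k + 1)) * !![1, 0; π ^ (k + 2) * v, 1] := by
  have hk : π ^ (k + 1 : ℤ) = π ^ (k + 1) := by norm_cast
  rw [diagZpow, neg_neg, _root_.zpow_neg, hk]
  simp only [mul_fin_two, EmbeddingLike.apply_eq_iff_eq, vecCons_inj, and_true]
  refine ⟨⟨?_, ?_⟩, ?_, ?_⟩ <;> field_simp
  · linear_combination -π ^ (k + 2) * huv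
  all_goals ring

theorem mem_integralSL2_mul_diagZpow_neg_one_mul_proIwahori [IsLocalRing O] (π : F) (b : O) :
    !![π, π ^ (-1 : ℤ) * algebraMap O F b; 0, π⁻¹] ∈
      integralSL2 O F * {diagZpow π (-1)} * proIwahori O F := by
  rw [upperTriangular_eq_unipotent_mul_diagZpow, ← mul_one (_ * diagZpow π (-1))]
  refine Set.mul_mem_mul (Set.mul_mem_mul ?_ rfl) one_mem_proIwahori
  simpa using mem_integralSL2_of_det_eq_one (F := F) (a := 1) (b := b) (c := 0) (d := 1) (by ring)

theorem mem_integralSL2_mul_diagZpow_mul_proIwahori [IsLocalRing O] {ϖ : O}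
    (hϖ : ϖ ∈ maximalIdeal O) (hπ : algebraMap O F ϖ ≠ 0) (u : Oˣ) (k : ℕ) :
    !![algebraMap O F ϖ, algebraMap O F ϖ ^ (-(k + 1 : ℤ)) * algebraMap O F u;
        0, (algebraMap O F ϖ)⁻¹] ∈
      integralSL2 O F * {diagZpow (algebraMap O F ϖ) (-(k + 1))} * proIwahori O F := by
  have huv : algebraMap O F u * algebraMap O F ↑u⁻¹ = 1 := by
    rw [← map_mul, u.mul_inv, map_one]
  rw [upperTriangular_eq_weyl_mul_diagZpow_mul_lowerUnipotent hπ huv]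
  refine Set.mul_mem_mul (Set.mul_mem_mul ?_ rfl) ?_
  · simpa using mem_integralSL2_of_det_eq_one (F := F) (a := 0) (b := ↑u) (c := -↑u⁻¹)
      (d := ϖ ^ k) (by simp)
  · simpa using lowerUnipotent_mem_proIwahori (F := F)
      (Ideal.mul_mem_right (↑u⁻¹) _ (Ideal.pow_mem_of_mem _ hϖ (k + 2) (by omega)))

end

/-- For `m ≥ 1` and `x ∈ O`, set
`M = (ϖ, ϖ^{1−2m}·x; 0, ϖ^{−1})`. If `x ∈ 𝔪^{2m−2}` then `M ∈ K₀·α₀^{−1}·I(1)`;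
otherwise there is `l ≤ −2` with `M ∈ K₀·α₀^{l}·I(1)`, where
`α₀^l = diag(ϖ^{−l}, ϖ^{l})`. -/
theorem stmt_14
    (O : Type*) [CommRing O] [IsDomain O] [IsDiscreteValuationRing O]
    (ϖ : O) (hϖ : Irreducible ϖ)
    (F : Type*) [Field F] [Algebra O F] [IsFractionRing O F]
    (m : ℕ) (hm : 1 ≤ m) (x : O)
    (K₀ : Set (Matrix (Fin 2) (Fin 2) F))
    (hK₀ : K₀ = {M | M.det = 1 ∧ ∀ i j, ∃ a : O, M i j = algebraMap O F a})
    (I1 : Set (Matrix (Fin 2) (Fin 2) F))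
    (hI1 : I1 = {M | ∃ a b c d : O,
        M = !![algebraMap O F a, algebraMap O F b; algebraMap O F c, algebraMap O F d] ∧
        a * d - b * c = 1 ∧
        a - 1 ∈ IsLocalRing.maximalIdeal O ∧ d - 1 ∈ IsLocalRing.maximalIdeal O ∧
        c ∈ IsLocalRing.maximalIdeal O})
    (α₀ : ℤ → Matrix (Fin 2) (Fin 2) F)
    (hα₀ : ∀ l : ℤ, α₀ l = !![algebraMap O F ϖ ^ (-l), 0; 0, algebraMap O F ϖ ^ l])
    (M : Matrix (Fin 2) (Fin 2) F)
    (hM : M = !![algebraMap O F ϖ, algebraMap O F ϖ ^ (1 - 2 * (m : ℤ)) * algebraMap O F x;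
          0, (algebraMap O F ϖ)⁻¹]) :
    (x ∈ IsLocalRing.maximalIdeal O ^ (2 * m - 2) → M ∈ K₀ * {α₀ (-1)} * I1) ∧
    (x ∉ IsLocalRing.maximalIdeal O ^ (2 * m - 2) →
      ∃ l : ℤ, l ≤ -2 ∧ M ∈ K₀ * {α₀ l} * I1) := by
  change K₀ = integralSL2 O F at hK₀
  change I1 = proIwahori O F at hI1
  have hα : α₀ = diagZpow (algebraMap O F ϖ) := funext hα₀
  subst hK₀ hI1 hα hM
  have hπ : algebraMap O F ϖ ≠ 0 :=
    (map_ne_zero_iff _ (IsFractionRing.injective O F)).mpr hϖ.ne_zero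
  constructor
  · intro hx
    obtain ⟨b, rfl⟩ := (hϖ.mem_maximalIdeal_pow_iff_dvd _).mp hx
    convert mem_integralSL2_mul_diagZpow_neg_one_mul_proIwahori (O := O) _ b using 4
    rw [map_mul, map_pow, ← mul_assoc, ← zpow_natCast, ← zpow_add₀ hπ]
    congr 3
    omega
  · intro hx
    obtain ⟨n, hn, u, rfl⟩ := hϖ.exists_eq_unit_mul_pow_of_notMem_maximalIdeal_pow hx
    refine ⟨-((2 * m - 2 - n : ℕ) + 1), by omega, ?_⟩
    convert mem_integralSL2_mul_diagZpow_mul_proIwahori (F := F)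
      ((mem_maximalIdeal ϖ).mpr hϖ.not_isUnit) hπ u (2 * m - 2 - n) using 4
    rw [map_mul, map_pow, mul_comm (algebraMap O F u), ← mul_assoc, ← zpow_natCast,
      ← zpow_add₀ hπ]
    congr 3
    omega
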